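/- Suppose x₄, ..., x₁₂ are defined from positive reals x₁, x₂, x₃ and positive rate constants by the rational formulas: x₄ = k₁k_cat(ℓ_cat+ℓ_off)(k_on x₂ + n₁x₃)x₁x₂ / (ℓ₃ℓ_cat(k_cat k_on x₂ + k_cat n₁x₃ + k_off n₁x₃)), x₅ = k₁k_cat(k_on x₂ + n₁x₃)x₁x₂ / (ℓ_cat(k_cat k_on x₂ + k_cat n₁x₃ + k_off n₁x₃)), x₆ = n₁k₁k_off x₁x₂x₃ / (n₃(k_cat k_on x₂ + k_cat n₁x₃ + k_off n₁x₃)), x₇ = k₁(k_on x₂ + n₁x₃)x₁x₂ / (k_cat k_on x₂ + k_cat n₁x₃ + k_off n₁x₃), x₈ = k₁k_cat ℓ_off(k_on x₂ + n₁x₃)x₁x₂ / (ℓ_cat m₃(k_cat k_on x₂ + k_cat n₁x₃ + k_off n₁x₃)), x₉ = k₁k_off x₁x₂ / (k_cat k_on x₂ + k_cat n₁x₃ + k_off n₁x₃), x₁₀ = k₁k_cat ℓ_off(k_on x₂ + n₁x₃)x₁ / (ℓ_cat m₂(k_cat k_on x₂ + k_cat n₁x₃ + k_off n₁x₃)), x₁₁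 = k₁x₁x₂/k₃, x₁₂ = k₁k_cat(ℓ_cat+ℓ_off)(k_on x₂ + n₁x₃)x₁x₂ / (ℓ_cat ℓ₁(k_cat k_on x₂ + k_cat n₁x₃ + k_off n₁x₃)x₃). Then the nine steady-state equations f₁ = f₄ = f₅ = f₆ = f₇ = f₈ = f₉ = f₁₀ = f₁₁ = 0 of the minimally bistable ERK subnetwork hold at (x₁,...,x₁₂). -/
import Mathlib


theorem stmt_8
    (k1 k3 kcat kon koff l1 l3 lcat loff m2 m3 n1 n3 : ℝ)
    (hk1 : 0 < k1) (hk3 : 0 < k3) (hkcat : 0 < kcat) (hkon : 0 < kon) (hkoff : 0 < koff)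
    (hl1 : 0 < l1) (hl3 : 0 < l3) (hlcat : 0 < lcat) (hloff : 0 < loff)
    (hm2 : 0 < m2) (hm3 : 0 < m3) (hn1 : 0 < n1) (hn3 : 0 < n3)
    (x1 x2 x3 x4 x5 x6 x7 x8 x9 x10 x11 x12 : ℝ)
    (hx1 : 0 < x1) (hx2 : 0 < x2) (hx3 : 0 < x3)
    (h4 : x4 = k1*kcat*(lcat + loff)*(kon*x2 + n1*x3)*x1*x2 /
      (l3*lcat*(kcat*kon*x2 + kcat*n1*x3 + koff*n1*x3)))
    (h5 : x5 = k1*kcat*(kon*x2 + n1*x3)*x1*x2 /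
      (lcat*(kcat*kon*x2 + kcat*n1*x3 + koff*n1*x3)))
    (h6 : x6 = n1*k1*koff*x1*x2*x3 /
      (n3*(kcat*kon*x2 + kcat*n1*x3 + koff*n1*x3)))
    (h7 : x7 = k1*(kon*x2 + n1*x3)*x1*x2 /
      (kcat*kon*x2 + kcat*n1*x3 + koff*n1*x3))
    (h8 : x8 = k1*kcat*loff*(kon*x2 + n1*x3)*x1*x2 /
      (lcat*m3*(kcat*kon*x2 + kcat*n1*x3 + koff*n1*x3)))
    (h9 : x9 = k1*koff*x1*x2 /
      (kcat*kon*x2 + kcat*n1*x3 + koff*n1*x3))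
    (h10 : x10 = k1*kcat*loff*(kon*x2 + n1*x3)*x1 /
      (lcat*m2*(kcat*kon*x2 + kcat*n1*x3 + koff*n1*x3)))
    (h11 : x11 = k1*x1*x2 / k3)
    (h12 : x12 = k1*kcat*(lcat + loff)*(kon*x2 + n1*x3)*x1*x2 /
      (lcat*l1*(kcat*kon*x2 + kcat*n1*x3 + koff*n1*x3)*x3)) :
    -k1*x1*x2 + lcat*x5 + n3*x6 = 0 ∧
    l1*x3*x12 - l3*x4 = 0 ∧
    l3*x4 - lcat*x5 - loff*x5 = 0 ∧
    n1*x3*x9 - n3*x6 = 0 ∧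
    kon*x2*x9 + k3*x11 - kcat*x7 - koff*x7 = 0 ∧
    m2*x2*x10 - m3*x8 = 0 ∧
    -kon*x2*x9 - n1*x3*x9 + koff*x7 = 0 ∧
    -m2*x2*x10 + loff*x5 = 0 ∧
    k1*x1*x2 - k3*x11 = 0 := by
  have hD : kcat*kon*x2 + kcat*n1*x3 + koff*n1*x3 ≠ 0 := by positivity
  subst h4 h5 h6 h7 h8 h9 h10 h11 h12
  refine ⟨?_, ?_, ?_, ?_, ?_, ?_, ?_, ?_, ?_⟩ <;>
    field_simp <;> ring
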